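/- arXiv:1212.0724 — 3 statements merged into one kernel-verified Lean document; each statement's English description precedes it below -/
import Mathlib

section
/- Every finite ordinal potential game possesses at least one pure-strategy Nash equilibrium. -/
/-- Every finite ordinal potential game possesses at least one
pure-strategy Nash equilibrium. -/
theorem stmt_0 {ι : Type*} [Fintype ι] [DecidableEq ι]
    (S : ι → Type*) [∀ i, Fintype (S i)] [∀ i, Nonempty (S i)]
    (u : ι → (∀ i, S i) → ℝ) (P : (∀ i, S i) → ℝ)
    (hP : ∀ (i : ι) (s : ∀ j, S j) (a : S i),
      u i (Function.update s i a) > u i s ↔ P (Function.update s i a) > P s) :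
    ∃ s : ∀ i, S i, ∀ (i : ι) (a : S i),
      u i (Function.update s i a) ≤ u i s := by
  obtain ⟨s, hs⟩ := Finite.exists_max P
  refine ⟨s, fun i a => ?_⟩
  by_contra h
  exact absurd ((hP i s a).mp (lt_of_not_ge h)) (not_lt.mpr (hs _))
end

section
/- Every finite ordinal potential game has the finite improvement property: every improvement path (a sequence of strategy profiles where each step is a unilateral deviation by one player that strictly increases that player's payoff) is finite. -/
/-- Every finite ordinal potential game has the finite improvement property:
there is no infinite improvement path. -/
theorem stmt_1 {ι : Type*} [Fintype ι] [DecidableEq ι]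
    (S : ι → Type*) [∀ i, Fintype (S i)] [∀ i, Nonempty (S i)]
    (u : ι → (∀ i, S i) → ℝ) (P : (∀ i, S i) → ℝ)
    (hP : ∀ (i : ι) (s : ∀ j, S j) (a : S i),
      u i (Function.update s i a) > u i s ↔ P (Function.update s i a) > P s) :
    ¬ ∃ s : ℕ → ∀ i, S i, ∀ t : ℕ, ∃ i : ι,
      (∀ j : ι, j ≠ i → s (t + 1) j = s t j) ∧
      u i (s (t + 1)) > u i (s t) := by
  rintro ⟨s, hs⟩
  have key : ∀ t, P (s (t + 1)) > P (s t) := by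
    intro t
    obtain ⟨i, hj, hu⟩ := hs t
    have heq : Function.update (s t) i (s (t + 1) i) = s (t + 1) := by
      funext j
      by_cases h : j = i
      · subst h; simp
      · rw [Function.update_of_ne h]; exact (hj j h).symm
    have := (hP i (s t) (s (t + 1) i))
    rw [heq] at this
    exact this.mp hu
  have hmono : StrictMono fun t => P (s t) := strictMono_nat_of_lt_succ key
  have hinj : Function.Injective s := fun a b h => hmono.injective (by simp [h])
  exact (Finite.of_injective s hinj).false
end

section
/- Every finite game admitting a generalized ordinal potential possesses a pure-strategy Nash equilibrium, namely any profile maximizing the potential. -/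
/-- Every finite game admitting a generalized ordinal potential possesses a
pure-strategy Nash equilibrium, namely any profile maximizing the potential. -/
theorem stmt_2 {ι : Type*} [Fintype ι] [DecidableEq ι]
    (S : ι → Type*) [∀ i, Fintype (S i)] [∀ i, Nonempty (S i)]
    (u : ι → (∀ i, S i) → ℝ) (P : (∀ i, S i) → ℝ)
    (hP : ∀ (i : ι) (s : ∀ j, S j) (a : S i),
      u i (Function.update s i a) > u i s → P (Function.update s i a) > P s) :
    (∃ s : ∀ i, S i, ∀ (i : ι) (a : S i), u i (Function.update s i a) ≤ u i s) ∧
    (∀ s : ∀ i, S i, (∀ t : ∀ i, S i, P t ≤ P s) →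
      ∀ (i : ι) (a : S i), u i (Function.update s i a) ≤ u i s) := by
  have key : ∀ s : ∀ i, S i, (∀ t : ∀ i, S i, P t ≤ P s) →
      ∀ (i : ι) (a : S i), u i (Function.update s i a) ≤ u i s := by
    intro s hs i a
    by_contra h
    exact absurd (hs _) (not_le.mpr (hP i s a (not_le.mp h)))
  obtain ⟨s, hs⟩ := Finite.exists_max P
  exact ⟨⟨s, key s (fun t => hs t)⟩, key⟩
end
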